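/- Every well quasi-ordered permutation class can be expressed as a finite union of atomic classes: if C is a well quasi-ordered permutation class, then there exist finitely many atomic permutation classes C₁, …, C_k with C = C₁ ∪ ⋯ ∪ C_k. -/

import Mathlib

open Filter

/-- A permutation of some finite length `n`. -/
abbrev Permu : Type := Σ n : ℕ, Equiv.Perm (Fin n)

/-- `PLe σ π` : the permutation `σ` is contained in `π` as a pattern. -/
def PLe (σ π : Permu) : Prop :=
  ∃ f : Fin σ.1 → Fin π.1, StrictMono f ∧
    ∀ i j : Fin σ.1, σ.2 i < σ.2 j ↔ π.2 (f i) < π.2 (f j)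

/-- A permutation class: a set of permutations closed downward under containment. -/
def IsPermClass (C : Set Permu) : Prop :=
  ∀ σ π : Permu, PLe σ π → π ∈ C → σ ∈ C

/-- The number of permutations of length `n` in `C`. -/
noncomputable def pcount (C : Set Permu) (n : ℕ) : ℕ :=
  Set.ncard {π ∈ C | π.1 = n}

/-- The upper growth rate of a class, as an extended real. -/
noncomputable def ugr (C : Set Permu) : EReal :=
  limsup (fun n : ℕ => (((pcount C n : ℝ) ^ ((n : ℝ)⁻¹) : ℝ) : EReal)) atTop

/-- The lower growth rate of a class, as an extended real. -/
noncomputable def lgr (C : Set Permu) : EReal :=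
  liminf (fun n : ℕ => (((pcount C n : ℝ) ^ ((n : ℝ)⁻¹) : ℝ) : EReal)) atTop
/-- A set of permutations is well quasi-ordered if it contains no infinite antichain
under the containment order. -/
def Wqo (S : Set Permu) : Prop :=
  ¬ ∃ f : ℕ → Permu, (∀ n, f n ∈ S) ∧ ∀ i j : ℕ, i ≠ j → ¬ PLe (f i) (f j)
/-- A set of permutations is atomic if it satisfies the joint embedding property. -/
def Atomic (A : Set Permu) : Prop :=
  ∀ σ ∈ A, ∀ τ ∈ A, ∃ π ∈ A, PLe σ π ∧ PLe τ π

/-!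
In a well quasi-order the lower sets satisfy the descending chain condition: from a strictly
decreasing chain `D₀ ⊋ D₁ ⊋ ⋯` pick `xₙ ∈ Dₙ \ Dₙ₊₁`; some `xₘ ≤ xₙ` with `m < n` then puts
`xₘ` in `Dₘ₊₁`. So every lower set may be split by well-founded induction: if it is not
directed, two of its elements `a`, `b` have no common upper bound in it, and it is the union of
the two smaller lower sets of its elements not above `a`, resp. not above `b`.

Pattern containment is a partial order in which permutation classes are the lower sets and atomic
classes the directed ones; it is well-founded, so `Wqo` (no infinite antichain) makes it
partially well-ordered.
-/

section WellQuasiOrder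

variable {α : Type*} [Preorder α] {s : Set α}

theorem Set.IsPWO.wellFoundedOn_ssubset_lowerSets (hs : s.IsPWO) :
    {t | t ⊆ s ∧ IsLowerSet t}.WellFoundedOn (· ⊂ ·) := by
  rw [Set.wellFoundedOn_iff_no_descending_seq]
  intro D hD
  have hsucc (n : ℕ) : D (n + 1) ⊂ D n := D.map_rel_iff.2 n.lt_succ_self
  have hanti {m n : ℕ} (hmn : m ≤ n) : D n ⊆ D m := by
    rcases hmn.eq_or_lt with rfl | hlt
    exacts [subset_rfl, (D.map_rel_iff.2 hlt).subset]
  choose x hxD hxD' using fun n => Set.exists_of_ssubset (hsucc n)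
  obtain ⟨m, n, hmn, hle⟩ := hs.exists_lt fun n => (hD n).1 (hxD n)
  exact hxD' m ((hD (m + 1)).2 hle (hanti hmn (hxD n)))

def IsFiniteUnionOfDirectedLowerSets (s : Set α) : Prop :=
  ∃ S : Set (Set α), S.Finite ∧ (∀ t ∈ S, IsLowerSet t ∧ DirectedOn (· ≤ ·) t) ∧ s = ⋃₀ S

theorem IsLowerSet.isFiniteUnionOfDirectedLowerSets (hs : IsLowerSet s)
    (hdir : DirectedOn (· ≤ ·) s) : IsFiniteUnionOfDirectedLowerSets s :=
  ⟨{s}, Set.finite_singleton s, by simpa using ⟨hs, hdir⟩, (Set.sUnion_singleton s).symm⟩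

theorem IsFiniteUnionOfDirectedLowerSets.union {t : Set α}
    (hs : IsFiniteUnionOfDirectedLowerSets s) (ht : IsFiniteUnionOfDirectedLowerSets t) :
    IsFiniteUnionOfDirectedLowerSets (s ∪ t) := by
  obtain ⟨S, hSfin, hS, rfl⟩ := hs
  obtain ⟨T, hTfin, hT, rfl⟩ := ht
  refine ⟨S ∪ T, hSfin.union hTfin, fun u hu => ?_, (Set.sUnion_union S T).symm⟩
  exact hu.elim (hS u) (hT u)

theorem IsLowerSet.eq_union_of_not_directedOn (hs : IsLowerSet s)
    (hdir : ¬ DirectedOn (· ≤ ·) s) :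
    ∃ a b, IsLowerSet (s \ Set.Ici a) ∧ IsLowerSet (s \ Set.Ici b) ∧
      s \ Set.Ici a ⊂ s ∧ s \ Set.Ici b ⊂ s ∧ s = (s \ Set.Ici a) ∪ (s \ Set.Ici b) := by
  simp only [DirectedOn, not_forall, not_exists, not_and] at hdir
  obtain ⟨a, ha, b, hb, hnone⟩ := hdir
  refine ⟨a, b, hs.sdiff_of_isUpperSet (isUpperSet_Ici a),
    hs.sdiff_of_isUpperSet (isUpperSet_Ici b), Set.sdiff_ssubset_left_iff.2 ⟨a, ha, le_rfl⟩,
    Set.sdiff_ssubset_left_iff.2 ⟨b, hb, le_rfl⟩, ?_⟩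
  ext c
  simp only [Set.mem_union, Set.mem_sdiff, Set.mem_Ici]
  have := hnone c
  tauto

theorem Set.IsPWO.isFiniteUnionOfDirectedLowerSets (hpwo : s.IsPWO) (hs : IsLowerSet s) :
    IsFiniteUnionOfDirectedLowerSets s := by
  refine hpwo.wellFoundedOn_ssubset_lowerSets.induction ⟨subset_rfl, hs⟩ ?_
  rintro t ⟨hts, ht⟩ IH
  by_cases hdir : DirectedOn (· ≤ ·) t
  · exact ht.isFiniteUnionOfDirectedLowerSets hdir
  obtain ⟨a, b, ha, hb, hat, hbt, heq⟩ := ht.eq_union_of_not_directedOn hdir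
  rw [heq]
  exact (IH _ ⟨hat.subset.trans hts, ha⟩ hat).union (IH _ ⟨hbt.subset.trans hts, hb⟩ hbt)

end WellQuasiOrder

namespace PLe

theorem refl (π : Permu) : PLe π π :=
  ⟨id, strictMono_id, fun _ _ => Iff.rfl⟩

theorem trans {σ τ π : Permu} (hστ : PLe σ τ) (hτπ : PLe τ π) : PLe σ π := by
  obtain ⟨f, hf, hfσ⟩ := hστ
  obtain ⟨g, hg, hgτ⟩ := hτπ
  exact ⟨g ∘ f, hg.comp hf, fun i j => (hfσ i j).trans (hgτ _ _)⟩

theorem length_le {σ π : Permu} (h : PLe σ π) : σ.1 ≤ π.1 := by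
  obtain ⟨f, hf, -⟩ := h
  simpa using Fintype.card_le_of_injective f hf.injective

/-- Two permutations of the same length with the same relative order are equal, since
`u ∘ v⁻¹` is then a strictly monotone self-map of `Fin n`. -/
theorem eq_of_length_eq {σ π : Permu} (h : PLe σ π) (hlen : σ.1 = π.1) : σ = π := by
  obtain ⟨n, u⟩ := σ
  obtain ⟨m, v⟩ := π
  cases hlen
  obtain ⟨f, hf, horder⟩ := h
  rw [hf.eq_id] at horder
  have huv : StrictMono fun x => u (v.symm x) := fun x y hxy =>
    (horder (v.symm x) (v.symm y)).2 (by simpa using hxy)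
  have huv_id := huv.eq_id
  congr
  exact Equiv.ext fun i => by simpa using congrFun huv_id (v i)

end PLe

instance : PartialOrder Permu where
  le := PLe
  le_refl := PLe.refl
  le_trans _ _ _ := PLe.trans
  le_antisymm _ _ h h' := h.eq_of_length_eq (h.length_le.antisymm h'.length_le)

theorem isPermClass_iff_isLowerSet {C : Set Permu} : IsPermClass C ↔ IsLowerSet C :=
  ⟨fun hC _ _ h hπ => hC _ _ h hπ, fun hC _ _ h hπ => hC h hπ⟩

theorem Permu.length_strictMono : StrictMono (fun π : Permu => π.1) := fun _ _ h =>
  h.le.length_le.lt_of_ne fun hlen => h.ne (PLe.eq_of_length_eq h.le hlen)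

instance : WellFoundedLT Permu := Permu.length_strictMono.wellFoundedLT

theorem Wqo.isPWO {C : Set Permu} (hC : Wqo C) : C.IsPWO := by
  have : WellQuasiOrderedLE C := by
    refine wellQuasiOrderedLE_iff.2 ⟨inferInstance, fun t ht => ?_⟩
    by_contra hinf
    let e := Set.Infinite.natEmbedding t hinf
    refine hC ⟨fun n => (e n : C), fun n => (e n : C).2, fun i j hij hle => ?_⟩
    exact ht (e i).2 (e j).2 (fun h => hij (e.injective (Subtype.ext h))) hle
  exact this.wqo

/-- Every well quasi-ordered permutation class is a finite union of
atomic permutation classes. -/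
theorem wqo_finite_union_of_atomic
    (C : Set Permu) (hC : IsPermClass C) (hwqo : Wqo C) :
    ∃ (k : ℕ) (A : Fin k → Set Permu),
      (∀ i, IsPermClass (A i) ∧ Atomic (A i)) ∧ C = ⋃ i, A i := by
  obtain ⟨S, hSfin, hS, hCS⟩ :=
    hwqo.isPWO.isFiniteUnionOfDirectedLowerSets (isPermClass_iff_isLowerSet.1 hC)
  obtain ⟨k, A, rfl⟩ := hSfin.fin_embedding
  refine ⟨k, A, fun i => ?_, hCS⟩
  obtain ⟨hlower, hdir⟩ := hS (A i) ⟨i, rfl⟩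
  exact ⟨isPermClass_iff_isLowerSet.2 hlower, hdir⟩
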